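/- Let G = (C ∪ I, E) be a split graph. Then mh(G) = |C| − 1 if and only if C contains a simplicial vertex; otherwise, mh(G) = |C|. -/
import Mathlib


open SimpleGraph

namespace HuntersRabbit

universe u

variable {V : Type u}

/-- `shots S i` is the set `S_{i+1}` shot at (paper, 1-indexed) round `i+1`. -/
def shots (S : List (Finset V)) (i : ℕ) : Finset V := S.getD i ∅

/-- A hunter strategy is a finite sequence of nonempty subsets of vertices. -/
def ValidStrategy (S : List (Finset V)) : Prop := ∀ s ∈ S, s.Nonempty

/-- The hunter strategy `S` uses at most `k` hunters. -/
def Uses (S : List (Finset V)) (k : ℕ) : Prop := ∀ s ∈ S, s.card ≤ k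

/-- A rabbit trajectory of length `ℓ` starting from `W`: a walk `r 0, r 1, …, r ℓ`
with `r 0 ∈ W` (only the values at `0, …, ℓ` are relevant). -/
def Trajectory (G : SimpleGraph V) (W : Set V) (ℓ : ℕ) (r : ℕ → V) : Prop :=
  r 0 ∈ W ∧ ∀ i, i < ℓ → G.Adj (r i) (r (i + 1))

/-- The hunter strategy `S = (S_1, …, S_ℓ)` is winning with respect to `W`:
every rabbit trajectory `(r_0, …, r_ℓ)` starting from `W` satisfies
`r_j ∈ S_{j+1}` for some `0 ≤ j < ℓ`. -/
def IsWinning (G : SimpleGraph V) (W : Set V) (S : List (Finset V)) : Prop :=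
  ∀ r : ℕ → V, Trajectory G W S.length r → ∃ j, j < S.length ∧ r j ∈ shots S j

/-- The contaminated sets: `Zset G W S 0 = W` and
`Zset G W S (i+1) = {x | ∃ y ∈ Zset G W S i \ S_{i+1}, y ~ x}`. -/
def Zset (G : SimpleGraph V) (W : Set V) (S : List (Finset V)) : ℕ → Set V
  | 0 => W
  | i + 1 => {x | ∃ y ∈ Zset G W S i, y ∉ shots S i ∧ G.Adj y x}

/-- `v` is cleared at (paper) round `i+1`: either `v ∈ S_{i+1}`, or
`N(v) ∩ Z_i` is nonempty and contained in `S_{i+1}`. -/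
def ClearedAt (G : SimpleGraph V) (W : Set V) (S : List (Finset V)) (v : V) (i : ℕ) : Prop :=
  v ∈ shots S i ∨
    ((G.neighborSet v ∩ Zset G W S i).Nonempty ∧
      G.neighborSet v ∩ Zset G W S i ⊆ ↑(shots S i))

/-- The strategy is monotone: whenever `v` is cleared at some round and `v ∈ Z_j`
for some later (or equal) round `j`, then `v ∈ S_{j+1}`. -/
def IsMonotoneStrat (G : SimpleGraph V) (W : Set V) (S : List (Finset V)) : Prop :=
  ∀ v : V, ∀ i j : ℕ, i < S.length → i < j → j < S.length →
    ClearedAt G W S v i → v ∈ Zset G W S j → v ∈ shots S j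

/-- The hunter number `h_W(G)`: the minimum `k` such that some winning hunter
strategy with respect to `W` uses `k` hunters (with the convention that it is `0`
for a one-vertex graph). -/
noncomputable def hunterNumW (G : SimpleGraph V) (W : Set V) : ℕ :=
  if Nat.card V = 1 then 0
  else sInf {k | ∃ S : List (Finset V), ValidStrategy S ∧ IsWinning G W S ∧ Uses S k}

/-- The hunter number `h(G) = h_V(G)`. -/
noncomputable def hunterNum (G : SimpleGraph V) : ℕ := hunterNumW G Set.univ

/-- The monotone hunter number `mh_W(G)`. -/
noncomputable def mhunterNumW (G : SimpleGraph V) (W : Set V) : ℕ :=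
  if Nat.card V = 1 then 0
  else sInf {k | ∃ S : List (Finset V),
    ValidStrategy S ∧ IsWinning G W S ∧ IsMonotoneStrat G W S ∧ Uses S k}

/-- The monotone hunter number `mh(G) = mh_V(G)`. -/
noncomputable def mhunterNum (G : SimpleGraph V) : ℕ := mhunterNumW G Set.univ

/-- `(C, I)` is a split partition of `G`: the vertex set is partitioned into `C`,
inducing an inclusion-maximal clique, and an independent set `I`. -/
def IsSplitPartition (G : SimpleGraph V) (C I : Finset V) : Prop :=
  (∀ v : V, v ∈ C ∨ v ∈ I) ∧ (∀ v : V, ¬(v ∈ C ∧ v ∈ I)) ∧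
  G.IsClique (↑C : Set V) ∧
  (∀ D : Finset V, C ⊆ D → G.IsClique (↑D : Set V) → D = C) ∧
  (∀ u ∈ I, ∀ v ∈ I, ¬ G.Adj u v)


/-! ### Auxiliary lemmas -/

lemma shots_eq_empty {S : List (Finset V)} {i : ℕ} (h : S.length ≤ i) : shots S i = ∅ := by
  simp [shots, List.getD_eq_getElem?_getD, List.getElem?_eq_none h]

lemma shots_card_le {S : List (Finset V)} {k : ℕ} (h : Uses S k) (i : ℕ) :
    (shots S i).card ≤ k := by
  rcases Nat.lt_or_ge i S.length with hi | hi
  · have hm : shots S i ∈ S := by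
      rw [shots, List.getD_eq_getElem?_getD, List.getElem?_eq_getElem hi]
      exact List.getElem_mem _
    exact h _ hm
  · simp [shots_eq_empty hi]

/-- If there is a contaminated unshot vertex at the last round, the strategy is not winning. -/
lemma not_winning_of_escape {G : SimpleGraph V} {S : List (Finset V)}
    (hlen : 1 ≤ S.length) {x : V}
    (hx : x ∈ Zset G Set.univ S (S.length - 1)) (hxs : x ∉ shots S (S.length - 1))
    {w : V} (hw : G.Adj x w) : ¬ IsWinning G Set.univ S := by
  classical
  intro hwin
  set ℓ := S.length with hℓ
  have step : ∀ (m : ℕ) (v : V), ∃ y : V,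
      (m + 1 ≤ ℓ - 1 ∧ v ∈ Zset G Set.univ S (ℓ - 1 - m) ∧ v ∉ shots S (ℓ - 1 - m)) →
      (y ∈ Zset G Set.univ S (ℓ - 1 - (m + 1)) ∧ y ∉ shots S (ℓ - 1 - (m + 1)) ∧ G.Adj y v) := by
    intro m v
    by_cases h : m + 1 ≤ ℓ - 1 ∧ v ∈ Zset G Set.univ S (ℓ - 1 - m) ∧ v ∉ shots S (ℓ - 1 - m)
    · obtain ⟨hm, hz, -⟩ := h
      have h1 : ℓ - 1 - m = (ℓ - 1 - (m + 1)) + 1 := by omega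
      rw [h1] at hz
      obtain ⟨y, hy1, hy2, hy3⟩ := hz
      exact ⟨y, fun _ => ⟨hy1, hy2, hy3⟩⟩
    · exact ⟨x, fun hc => absurd hc h⟩
  let back : ℕ → V := fun m => Nat.rec x (fun m ih => (step m ih).choose) m
  have hback0 : back 0 = x := rfl
  have hbacks : ∀ m, back (m + 1) = (step m (back m)).choose := fun m => rfl
  have hinv : ∀ m, m ≤ ℓ - 1 →
      back m ∈ Zset G Set.univ S (ℓ - 1 - m) ∧ back m ∉ shots S (ℓ - 1 - m) := by
    intro m
    induction m with
    | zero => intro _; exact ⟨hx, hxs⟩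
    | succ m ih =>
      intro hm
      obtain ⟨hz, hs⟩ := ih (by omega)
      have := (step m (back m)).choose_spec ⟨hm, hz, hs⟩
      rw [hbacks m]
      exact ⟨this.1, this.2.1⟩
  have hadjb : ∀ m, m + 1 ≤ ℓ - 1 → G.Adj (back (m + 1)) (back m) := by
    intro m hm
    obtain ⟨hz, hs⟩ := hinv m (by omega)
    have := (step m (back m)).choose_spec ⟨hm, hz, hs⟩
    rw [hbacks m]
    exact this.2.2
  let r : ℕ → V := fun j => if j ≤ ℓ - 1 then back (ℓ - 1 - j) else w
  have htraj : Trajectory G Set.univ ℓ r := by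
    refine ⟨trivial, ?_⟩
    intro i hi
    by_cases h : i + 1 ≤ ℓ - 1
    · have hri : r i = back (ℓ - 1 - i) := if_pos (by omega)
      have hri1 : r (i + 1) = back (ℓ - 1 - (i + 1)) := if_pos h
      have h2 : ℓ - 1 - i = (ℓ - 1 - (i + 1)) + 1 := by omega
      have := hadjb (ℓ - 1 - (i + 1)) (by omega)
      rw [hri, hri1, h2]
      exact this
    · have hri : r i = back (ℓ - 1 - i) := if_pos (by omega)
      have h0 : ℓ - 1 - i = 0 := by omega
      rw [h0] at hri
      have hri1 : r (i + 1) = w := if_neg (by omega)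
      rw [hri, hri1, hback0]; exact hw
  obtain ⟨j, hj, hjs⟩ := hwin r htraj
  have hrj : r j = back (ℓ - 1 - j) := if_pos (by omega)
  have h3 : ℓ - 1 - (ℓ - 1 - j) = j := by omega
  have := (hinv (ℓ - 1 - j) (by omega)).2
  rw [h3] at this
  rw [hrj] at hjs
  exact this hjs

/-- With at most `|C| - 2` hunters, a rabbit can survive inside the clique `C`. -/
lemma not_winning_of_big_clique {G : SimpleGraph V} {C : Finset V} (hC : G.IsClique (↑C : Set V))
    {S : List (Finset V)} {k : ℕ} (hk : Uses S k) (hk2 : k + 2 ≤ C.card) :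
    ¬ IsWinning G Set.univ S := by
  classical
  have hstep : ∀ (n : ℕ) (x : V), ∃ y, y ∈ C ∧ y ∉ shots S n ∧ y ≠ x := by
    intro n x
    have h1 : 1 < (C \ shots S n).card := by
      have := Finset.le_card_sdiff (shots S n) C
      have := shots_card_le hk n
      omega
    obtain ⟨y, hy, hyx⟩ := Finset.exists_mem_ne h1 x
    obtain ⟨hy1, hy2⟩ := Finset.mem_sdiff.mp hy
    exact ⟨y, hy1, hy2, hyx⟩
  have hCne : C.Nonempty := Finset.card_pos.mp (by omega)
  obtain ⟨c0, _⟩ := hCne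
  let r : ℕ → V := fun n => Nat.rec (hstep 0 c0).choose (fun n ih => (hstep (n + 1) ih).choose) n
  have hprop : ∀ n, r n ∈ C ∧ r n ∉ shots S n := by
    intro n
    cases n with
    | zero => exact ⟨(hstep 0 c0).choose_spec.1, (hstep 0 c0).choose_spec.2.1⟩
    | succ n => exact ⟨(hstep (n + 1) (r n)).choose_spec.1, (hstep (n + 1) (r n)).choose_spec.2.1⟩
  have hne : ∀ n, r (n + 1) ≠ r n := fun n => (hstep (n + 1) (r n)).choose_spec.2.2
  intro hwin
  obtain ⟨j, _, hjs⟩ := hwin r ⟨trivial, fun i _ =>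
    hC (Finset.mem_coe.mpr (hprop i).1) (Finset.mem_coe.mpr (hprop (i + 1)).1) (hne i).symm⟩
  exact (hprop j).2 hjs


/-- `v` is "banned" from time `i` on: whenever it is contaminated at a round `j ≥ i`,
it must be shot at round `j + 1`. -/
def Banned (G : SimpleGraph V) (S : List (Finset V)) (v : V) (i : ℕ) : Prop :=
  ∀ j, i ≤ j → j < S.length → v ∈ Zset G Set.univ S j → v ∈ shots S j

/-- In a monotone strategy starting from everything contaminated, a currently clean
vertex is banned forever. -/
lemma banned_of_notMem_Z {G : SimpleGraph V} {S : List (Finset V)}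
    (hmono : IsMonotoneStrat G Set.univ S) :
    ∀ i (v : V), v ∉ Zset G Set.univ S i → Banned G S v i := by
  intro i
  induction i with
  | zero => intro v hv; exact absurd (Set.mem_univ v) hv
  | succ i ih =>
    intro v hv
    by_cases hvi : v ∈ Zset G Set.univ S i
    · by_cases hne : ∃ y, G.Adj v y ∧ y ∈ Zset G Set.univ S i
      · -- v is cleared at round i
        have hsub : G.neighborSet v ∩ Zset G Set.univ S i ⊆ ↑(shots S i) := by
          rintro y ⟨hy1, hy2⟩
          by_contra hys
          exact hv ⟨y, hy2, hys, ((G.mem_neighborSet v y).mp hy1).symm⟩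
        obtain ⟨y0, hy01, hy02⟩ := hne
        have hclr : ClearedAt G Set.univ S v i :=
          Or.inr ⟨⟨y0, (G.mem_neighborSet v y0).mpr hy01, hy02⟩, hsub⟩
        have hilen : i < S.length := by
          by_contra hig
          have h0 : shots S i = ∅ := shots_eq_empty (by omega)
          have := hsub ⟨(G.mem_neighborSet v y0).mpr hy01, hy02⟩
          rw [h0] at this
          simp at this
        intro j h1 h2 h3
        exact hmono v i j hilen (by omega) h2 hclr h3
      · -- v has no contaminated neighbour at time i: it can never be recontaminated
        push_neg at hne
        intro j h1 h2 h3
        obtain ⟨m, rfl⟩ : ∃ m, j = m + 1 := ⟨j - 1, by omega⟩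
        obtain ⟨y, hy1, hy2, hy3⟩ := h3
        have hyZ : y ∉ Zset G Set.univ S i := hne y hy3.symm
        exact absurd (ih y hyZ m (by omega) (by omega) hy1) hy2
    · intro j h1 h2 h3
      exact ih v hvi j (by omega) h2 h3

/-- Key lower bound: if every clique vertex has a neighbour in the independent set,
then any monotone winning strategy uses at least `|C|` hunters. -/
lemma mono_lower {G : SimpleGraph V} {C I : Finset V}
    (hsplit : IsSplitPartition G C I)
    (hns : ∀ c ∈ C, ∃ u ∈ I, G.Adj c u)
    {S : List (Finset V)} {k : ℕ}
    (hwin : IsWinning G Set.univ S) (hmono : IsMonotoneStrat G Set.univ S) (hk : Uses S k) :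
    C.card ≤ k := by
  classical
  obtain ⟨hpart, hdisj, hclique, hmax, hind⟩ := hsplit
  by_contra hlt
  push_neg at hlt
  set ℓ := S.length with hℓ
  have hCne : C.Nonempty := Finset.card_pos.mp (by omega)
  obtain ⟨c0, hc0⟩ := hCne
  have hlen : 1 ≤ ℓ := by
    by_contra h
    obtain ⟨j, hj, -⟩ := hwin (fun _ => c0) ⟨Set.mem_univ _, fun i hi => absurd hi (by omega)⟩
    omega
  set Z : ℕ → Set V := Zset G Set.univ S with hZdef
  let CZ : ℕ → Finset V := fun i => C.filter (fun c => c ∈ Z i)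
  let FI : ℕ → Finset V := fun i => I.filter (fun u => u ∈ Z i ∧ ∃ s, s < i ∧ u ∉ Z s)
  have hbanned := banned_of_notMem_Z hmono
  have hFIsub : ∀ i, i < ℓ → FI i ⊆ shots S i := by
    intro i hi u hu
    simp only [FI, Finset.mem_filter] at hu
    obtain ⟨huI, huZ, s, hs, hus⟩ := hu
    exact hbanned s u hus i (by omega) hi huZ
  have hdisjCI : ∀ x, x ∈ C → x ∈ I → False := fun x h1 h2 => hdisj x ⟨h1, h2⟩
  -- from the potential inequality, find a free contaminated clique vertex
  have hfree : ∀ i, i < ℓ → C.card ≤ (CZ i).card + (FI i).card →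
      ∃ c', c' ∈ C ∧ c' ∈ Z i ∧ c' ∉ shots S i := by
    intro i hi hphi
    by_contra h
    push_neg at h
    have hsub : CZ i ∪ FI i ⊆ shots S i := by
      intro x hx
      rcases Finset.mem_union.mp hx with hx | hx
      · have hx' := Finset.mem_filter.mp hx
        exact h x hx'.1 hx'.2
      · exact hFIsub i hi hx
    have hdj : Disjoint (CZ i) (FI i) := by
      rw [Finset.disjoint_left]
      intro a ha hb
      exact hdisjCI a (Finset.mem_filter.mp ha).1 (Finset.mem_filter.mp hb).1
    have h1 : (CZ i).card + (FI i).card ≤ (shots S i).card := by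
      rw [← Finset.card_union_of_disjoint hdj]
      exact Finset.card_le_card hsub
    have h2 := shots_card_le hk i
    omega
  have hCZsucc : ∀ (i : ℕ) (c' : V), c' ∈ C → c' ∈ Z i → c' ∉ shots S i →
      ∀ c'', c'' ∈ C → c'' ≠ c' → c'' ∈ Z (i + 1) := by
    intro i c' h1 h2 h3 c'' h4 h5
    exact ⟨c', h2, h3, hclique (Finset.mem_coe.mpr h1) (Finset.mem_coe.mpr h4) (Ne.symm h5)⟩
  -- the potential inequality
  have hphi : ∀ i, i < ℓ → C.card ≤ (CZ i).card + (FI i).card := by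
    intro i
    induction i with
    | zero =>
      intro _
      have hCZ0 : CZ 0 = C := Finset.filter_true_of_mem (fun c _ => Set.mem_univ c)
      rw [hCZ0]
      omega
    | succ i ih =>
      intro hi1
      have hi : i < ℓ := by omega
      obtain ⟨c', h1, h2, h3⟩ := hfree i hi (ih hi)
      by_cases hcz : c' ∈ Z (i + 1)
      · -- c' stays contaminated: the whole clique is contaminated
        have hCsub : C ⊆ CZ (i + 1) := by
          intro c'' hc''
        -- c'' ∈ Z (i+1)
          rcases eq_or_ne c'' c' with rfl | hne
          · exact Finset.mem_filter.mpr ⟨hc'', hcz⟩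
          · exact Finset.mem_filter.mpr ⟨hc'', hCZsucc i c' h1 h2 h3 c'' hc'' hne⟩
        have := Finset.card_le_card hCsub
        omega
      · -- c' is cleared at round i
        have hNsub : ∀ y, y ∈ Z i → y ∉ shots S i → ¬ G.Adj y c' :=
          fun y hy hys hadj => hcz ⟨y, hy, hys, hadj⟩
        -- every contaminated I-neighbour of c' was already banned
        have hA3 : ∀ u, u ∈ I → G.Adj c' u → u ∈ Z i → u ∈ FI i := by
          intro u huI hadj huZ
          by_contra hu
          have hc'CZ : c' ∈ CZ i := Finset.mem_filter.mpr ⟨h1, h2⟩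
          have hTsub : ((CZ i).erase c') ∪ (insert u (FI i)) ⊆ shots S i := by
            intro x hx
            rcases Finset.mem_union.mp hx with hx | hx
            · obtain ⟨hxne, hxm⟩ := Finset.mem_erase.mp hx
              obtain ⟨hxC, hxZ⟩ := Finset.mem_filter.mp hxm
              by_contra hxs
              exact hNsub x hxZ hxs
                (hclique (Finset.mem_coe.mpr hxC) (Finset.mem_coe.mpr h1) hxne)
            · rcases Finset.mem_insert.mp hx with rfl | hx
              · by_contra hus
                exact hNsub x huZ hus hadj.symm
              · exact hFIsub i hi hx
          have hdjT : Disjoint ((CZ i).erase c') (insert u (FI i)) := by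
            rw [Finset.disjoint_left]
            intro a ha hb
            have haC : a ∈ C := (Finset.mem_filter.mp (Finset.mem_of_mem_erase ha)).1
            rcases Finset.mem_insert.mp hb with rfl | hb
            · exact hdisjCI a haC huI
            · exact hdisjCI a haC (Finset.mem_filter.mp hb).1
          have hcard1 : ((CZ i).erase c').card = (CZ i).card - 1 :=
            Finset.card_erase_of_mem hc'CZ
          have hcard2 : (insert u (FI i)).card = (FI i).card + 1 :=
            Finset.card_insert_of_notMem hu
          have hcard3 : ((CZ i).erase c' ∪ insert u (FI i)).card ≤ (shots S i).card :=
            Finset.card_le_card hTsub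
          rw [Finset.card_union_of_disjoint hdjT, hcard1, hcard2] at hcard3
          have h4 := shots_card_le hk i
          have h5 := ih hi
          have h6 : 1 ≤ (CZ i).card := Finset.card_pos.mpr ⟨c', hc'CZ⟩
          omega
        obtain ⟨u₀, hu₀I, hu₀adj⟩ := hns c' h1
        have hu₀Z : u₀ ∈ Z (i + 1) := ⟨c', h2, h3, hu₀adj⟩
        have hu₀FI : u₀ ∈ FI (i + 1) := by
          refine Finset.mem_filter.mpr ⟨hu₀I, hu₀Z, ?_⟩
          by_cases h : u₀ ∈ Z i
          · obtain ⟨-, -, s, hs, hZs⟩ := Finset.mem_filter.mp (hA3 u₀ hu₀I hu₀adj h)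
            exact ⟨s, by omega, hZs⟩
          · exact ⟨i, by omega, h⟩
        have hCsub : C.erase c' ⊆ CZ (i + 1) := by
          intro c'' hc''
          obtain ⟨hne, hcC⟩ := Finset.mem_erase.mp hc''
          exact Finset.mem_filter.mpr ⟨hcC, hCZsucc i c' h1 h2 h3 c'' hcC hne⟩
        have h5 : C.card - 1 ≤ (CZ (i + 1)).card := by
          have := Finset.card_le_card hCsub
          rw [Finset.card_erase_of_mem h1] at this
          exact this
        have h6 : 1 ≤ (FI (i + 1)).card := Finset.card_pos.mpr ⟨u₀, hu₀FI⟩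
        have h7 : 1 ≤ C.card := Finset.card_pos.mpr ⟨c', h1⟩
        omega
  -- conclusion: a free contaminated clique vertex at the last round
  obtain ⟨cs, hc1, hc2, hc3⟩ := hfree (ℓ - 1) (by omega) (hphi (ℓ - 1) (by omega))
  obtain ⟨u, huI, huadj⟩ := hns cs hc1
  exact not_winning_of_escape hlen hc2 hc3 huadj hwin


section Structural
variable {G : SimpleGraph V} {C I : Finset V}

/-- In a connected split graph the clique is nonempty. -/
lemma clique_nonempty (hG : G.Connected) (hsplit : IsSplitPartition G C I) : C.Nonempty := by
  obtain ⟨v⟩ := hG.nonempty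
  by_contra h
  rw [Finset.not_nonempty_iff_eq_empty] at h
  obtain ⟨-, -, -, hmax, -⟩ := hsplit
  have h1 : G.IsClique (↑({v} : Finset V) : Set V) := by
    simp [Set.Pairwise]
  have := hmax {v} (by simp [h]) h1
  simp [h] at this

/-- Every neighbour of an independent vertex is in the clique. -/
lemma nbr_of_I (hsplit : IsSplitPartition G C I) {u x : V} (hu : u ∈ I) (h : G.Adj u x) :
    x ∈ C := by
  obtain ⟨hpart, -, -, -, hind⟩ := hsplit
  rcases hpart x with hx | hx
  · exact hx
  · exact absurd h (hind u hu x hx)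

/-- If the clique has a single vertex, the whole graph is a single vertex. -/
lemma card_V_of_C_singleton [Fintype V] (hG : G.Connected) (hsplit : IsSplitPartition G C I)
    (h1 : C.card = 1) : Fintype.card V = 1 := by
  classical
  obtain ⟨c, hc⟩ := Finset.card_eq_one.mp h1
  subst hc
  rw [Fintype.card_eq_one_iff]
  refine ⟨c, fun x => ?_⟩
  by_contra hx
  obtain ⟨p⟩ := hG.preconnected c x
  have hadj : ∃ y, G.Adj c y := by
    cases p with
    | nil => exact absurd rfl hx
    | cons h q => exact ⟨_, h⟩
  obtain ⟨y, hy⟩ := hadj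
  obtain ⟨hpart, hdisj, hclique, hmax, hind⟩ := hsplit
  have hyc : y ≠ c := fun h => G.irrefl (h ▸ hy)
  have hyI : y ∈ I := by
    rcases hpart y with h | h
    · exact absurd (Finset.mem_singleton.mp h) hyc
    · exact h
  have hcl : G.IsClique (↑({y, c} : Finset V) : Set V) := by
    have : (↑({y, c} : Finset V) : Set V) = {y, c} := by simp
    rw [this]
    intro a ha b hb hne
    rcases ha with rfl | ha <;> rcases hb with rfl | hb
    · exact absurd rfl hne
    · rw [Set.mem_singleton_iff] at hb; subst hb; exact hy.symm
    · rw [Set.mem_singleton_iff] at ha; subst ha; exact hy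
    · rw [Set.mem_singleton_iff] at ha hb; subst ha; subst hb; exact absurd rfl hne
  have := hmax {y, c} (by intro a ha; simp at ha; subst ha; simp) hcl
  have hym : y ∈ ({y, c} : Finset V) := by simp
  rw [this] at hym
  exact hyc (Finset.mem_singleton.mp hym)

/-- A simplicial vertex of the clique has neighbourhood exactly `C \ {v}`. -/
lemma simplicial_neighborSet [Fintype V] [DecidableEq V] (hsplit : IsSplitPartition G C I) {v : V} (hv : v ∈ C)
    (hcl : G.IsClique (G.neighborSet v)) :
    G.neighborSet v = (↑(C.erase v) : Set V) := by
  classical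
  obtain ⟨hpart, hdisj, hclique, hmax, hind⟩ := hsplit
  apply Set.Subset.antisymm
  · intro x hx
    have hxv : x ≠ v := fun h => G.irrefl (h ▸ hx)
    have hxC : x ∈ C := by
      let D := insert v (G.neighborFinset v)
      have hclD : G.IsClique (↑D : Set V) := by
        have hD : (↑D : Set V) = insert v (G.neighborSet v) := by
          simp [D, SimpleGraph.neighborFinset, Set.coe_toFinset]
        rw [hD]
        refine hcl.insert ?_
        intro b hb _
        exact hb
      have hCD : C ⊆ D := by
        intro c hc
        rcases eq_or_ne c v with rfl | hne
        · exact Finset.mem_insert_self _ _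
        · refine Finset.mem_insert_of_mem ?_
          rw [mem_neighborFinset]
          exact hclique (Finset.mem_coe.mpr hv) (Finset.mem_coe.mpr hc) (Ne.symm hne)
      have hD2 := hmax D hCD hclD
      have : x ∈ D := Finset.mem_insert_of_mem (by rwa [mem_neighborFinset])
      rwa [hD2] at this
    exact Finset.mem_coe.mpr (Finset.mem_erase.mpr ⟨hxv, hxC⟩)
  · intro x hx
    obtain ⟨hxv, hxC⟩ := Finset.mem_erase.mp (Finset.mem_coe.mp hx)
    exact hclique (Finset.mem_coe.mpr hv) (Finset.mem_coe.mpr hxC) (Ne.symm hxv)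

/-- If no clique vertex is simplicial, every clique vertex has an independent neighbour. -/
lemma exists_I_neighbor (hsplit : IsSplitPartition G C I)
    (hns : ¬∃ v ∈ C, G.IsClique (G.neighborSet v)) :
    ∀ c ∈ C, ∃ u ∈ I, G.Adj c u := by
  intro c hc
  by_contra h
  push_neg at h
  refine hns ⟨c, hc, ?_⟩
  obtain ⟨hpart, hdisj, hclique, hmax, hind⟩ := hsplit
  have hsub : G.neighborSet c ⊆ (↑C : Set V) := by
    intro x hx
    rcases hpart x with hC | hI
    · exact hC
    · exact absurd hx (h x hI)
  exact hclique.subset hsub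

end Structural

section Strat
variable {G : SimpleGraph V} {C I : Finset V}

/-- The strategy `[C, C]` is a valid monotone winning strategy using `|C|` hunters. -/
lemma strategy_CC (hsplit : IsSplitPartition G C I) (hCne : C.Nonempty) :
    ValidStrategy [C, C] ∧ IsWinning G Set.univ [C, C] ∧
      IsMonotoneStrat G Set.univ [C, C] ∧ Uses [C, C] C.card := by
  obtain ⟨hpart, hdisj, hclique, hmax, hind⟩ := hsplit
  have hs : ∀ i, shots [C, C] i = if i < 2 then C else ∅ := by
    intro i
    match i with
    | 0 => rfl
    | 1 => rfl
    | (n+2) => rfl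
  refine ⟨?_, ?_, ?_, ?_⟩
  · intro s hs
    rcases List.mem_pair.mp hs with rfl | rfl <;> exact hCne
  · intro r ⟨h0, hadj⟩
    rcases hpart (r 0) with h | h
    · exact ⟨0, by norm_num, by rw [hs 0]; simpa using h⟩
    · have h1 : r 1 ∈ C :=
        nbr_of_I ⟨hpart, hdisj, hclique, hmax, hind⟩ h (hadj 0 (by norm_num))
      exact ⟨1, by norm_num, by rw [hs 1]; simpa using h1⟩
  · intro v i j hi hij hj hclr hz
    have hlen : ([C, C] : List (Finset V)).length = 2 := rfl
    rw [hlen] at hi hj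
    have hj1 : j = 1 := by omega
    subst hj1
    obtain ⟨y, hy, hys, hadj⟩ := hz
    rw [hs 0] at hys
    simp only [if_pos (by norm_num : (0:ℕ) < 2)] at hys
    have hyI : y ∈ I := by
      rcases hpart y with h | h
      · exact absurd h hys
      · exact h
    have : v ∈ C := nbr_of_I ⟨hpart, hdisj, hclique, hmax, hind⟩ hyI hadj
    rw [hs 1]
    simpa using this
  · intro s hs
    rcases List.mem_pair.mp hs with rfl | rfl <;> exact le_rfl
end Strat

section Strat2
variable {G : SimpleGraph V} {C I : Finset V}

/-- If `v₀ ∈ C` is simplicial (`N(v₀) = C \ {v₀}`), the strategy `[C\v₀, C\v₀, C\v₀]`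
is a valid monotone winning strategy using `|C| - 1` hunters. -/
lemma strategy_D [DecidableEq V] (hsplit : IsSplitPartition G C I) {v₀ : V} (hv₀ : v₀ ∈ C)
    (hNv : G.neighborSet v₀ = (↑(C.erase v₀) : Set V)) (hC2 : 2 ≤ C.card) :
    ValidStrategy [C.erase v₀, C.erase v₀, C.erase v₀] ∧
      IsWinning G Set.univ [C.erase v₀, C.erase v₀, C.erase v₀] ∧
      IsMonotoneStrat G Set.univ [C.erase v₀, C.erase v₀, C.erase v₀] ∧
      Uses [C.erase v₀, C.erase v₀, C.erase v₀] (C.card - 1) := by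
  obtain ⟨hpart, hdisj, hclique, hmax, hind⟩ := hsplit
  set D := C.erase v₀ with hD
  have hcardD : D.card = C.card - 1 := Finset.card_erase_of_mem hv₀
  have hDne : D.Nonempty := Finset.card_pos.mp (by omega)
  have hs : ∀ i, shots [D, D, D] i = if i < 3 then D else ∅ := by
    intro i
    match i with
    | 0 => rfl
    | 1 => rfl
    | 2 => rfl
    | (n+3) => rfl
  have hmemL : ∀ s : Finset V, s ∈ [D, D, D] → s = D := by
    intro s hs
    rcases List.mem_cons.mp hs with rfl | hs
    · rfl
    · rcases List.mem_pair.mp hs with rfl | rfl <;> rfl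
  have hnbr : ∀ x : V, G.Adj v₀ x → x ∈ D := by
    intro x hx
    have : x ∈ G.neighborSet v₀ := hx
    rwa [hNv] at this
  refine ⟨fun s hs => (hmemL s hs) ▸ hDne, ?_, ?_, fun s hs => (hmemL s hs) ▸ hcardD.le⟩
  · -- winning
    intro r ⟨h0, hadj⟩
    have hlen : ([D, D, D] : List (Finset V)).length = 3 := rfl
    rw [hlen] at hadj ⊢
    rcases hpart (r 0) with h | h
    · rcases eq_or_ne (r 0) v₀ with h0' | h0'
      · have h1 : r 1 ∈ D := hnbr (r 1) (h0' ▸ hadj 0 (by norm_num))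
        exact ⟨1, by norm_num, by rw [hs 1]; simpa using h1⟩
      · refine ⟨0, by norm_num, ?_⟩
        rw [hs 0, if_pos (by norm_num)]
        exact Finset.mem_erase.mpr ⟨h0', h⟩
    · have h1 : r 1 ∈ C :=
        nbr_of_I ⟨hpart, hdisj, hclique, hmax, hind⟩ h (hadj 0 (by norm_num))
      rcases eq_or_ne (r 1) v₀ with h1' | h1'
      · have h2 : r 2 ∈ D := hnbr (r 2) (h1' ▸ hadj 1 (by norm_num))
        exact ⟨2, by norm_num, by rw [hs 2]; simpa using h2⟩
      · refine ⟨1, by norm_num, ?_⟩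
        rw [hs 1, if_pos (by norm_num)]
        exact Finset.mem_erase.mpr ⟨h1', h1⟩
  · -- monotone
    have hZ1 : ∀ x : V, x ∈ Zset G Set.univ [D, D, D] 1 → x ∈ D := by
      intro x hx
      obtain ⟨y, hy, hys, hadj⟩ := hx
      rw [hs 0] at hys
      simp only [if_pos (by norm_num : (0:ℕ) < 3)] at hys
      rcases hpart y with h | h
      · have hy0 : y = v₀ := by
          by_contra hne
          exact hys (Finset.mem_erase.mpr ⟨hne, h⟩)
        exact hnbr x (hy0 ▸ hadj)
      · have hxC : x ∈ C := nbr_of_I ⟨hpart, hdisj, hclique, hmax, hind⟩ h hadj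
        have hxv : x ≠ v₀ := by
          intro heq
          have h2 : y ∈ G.neighborSet v₀ := by
            rw [← heq]
            exact hadj.symm
          rw [hNv] at h2
          exact hdisj y ⟨Finset.mem_of_mem_erase (Finset.mem_coe.mp h2), h⟩
        exact Finset.mem_erase.mpr ⟨hxv, hxC⟩
    have hZ2 : ∀ x : V, x ∈ Zset G Set.univ [D, D, D] 2 → False := by
      intro x hx
      obtain ⟨y, hy, hys, -⟩ := hx
      rw [hs 1] at hys
      simp only [if_pos (by norm_num : (1:ℕ) < 3)] at hys
      exact hys (hZ1 y hy)
    intro v i j hi hij hj hclr hz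
    have hlen : ([D, D, D] : List (Finset V)).length = 3 := rfl
    rw [hlen] at hi hj
    have : j = 1 ∨ j = 2 := by omega
    rcases this with rfl | rfl
    · rw [hs 1]
      simpa using hZ1 v hz
    · exact absurd hz (fun h => hZ2 v h)
end Strat2

/-- For a split graph `G = (C ∪ I, E)`: `mh(G) = |C| − 1` iff `C` contains a
simplicial vertex; otherwise `mh(G) = |C|`. -/
theorem split_mhunterNum_characterisation {V : Type} [Fintype V]
    (G : SimpleGraph V) (hG : G.Connected) (C I : Finset V)
    (hsplit : IsSplitPartition G C I) :
    (mhunterNum G = C.card - 1 ↔ ∃ v ∈ C, G.IsClique (G.neighborSet v)) ∧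
    (¬(∃ v ∈ C, G.IsClique (G.neighborSet v)) → mhunterNum G = C.card) := by
  classical
  have hCne : C.Nonempty := clique_nonempty hG hsplit
  obtain ⟨hpart, hdisj, hclique, hmax, hind⟩ := id hsplit
  by_cases hcard1 : Fintype.card V = 1
  · -- the one-vertex case
    have hmh : mhunterNum G = 0 := by
      simp only [mhunterNum, mhunterNumW]
      rw [if_pos (by rw [Nat.card_eq_fintype_card]; exact hcard1)]
    have hC1 : C.card = 1 := by
      have h2 : C.card ≤ Fintype.card V := Finset.card_le_univ C
      have h3 : 1 ≤ C.card := hCne.card_pos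
      omega
    have hsimp : ∃ v ∈ C, G.IsClique (G.neighborSet v) := by
      obtain ⟨c, hc⟩ := hCne
      refine ⟨c, hc, ?_⟩
      intro a ha b hb hne
      exact absurd (Fintype.card_le_one_iff.mp (le_of_eq hcard1) a b) hne
    exact ⟨⟨fun _ => hsimp, fun _ => by rw [hmh, hC1]⟩, fun h => absurd hsimp h⟩
  · have hcard1' : ¬ Nat.card V = 1 := by
      rw [Nat.card_eq_fintype_card]; exact hcard1
    have hmh_eq : mhunterNum G = sInf {k | ∃ S : List (Finset V),
        ValidStrategy S ∧ IsWinning G Set.univ S ∧ IsMonotoneStrat G Set.univ S ∧ Uses S k} := by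
      simp only [mhunterNum, mhunterNumW]
      rw [if_neg hcard1']
    have hC2 : 2 ≤ C.card := by
      by_contra h
      have hc1 : C.card = 1 := by
        have := hCne.card_pos
        omega
      exact hcard1 (card_V_of_C_singleton hG hsplit hc1)
    obtain ⟨hv, hw, hm, hu⟩ := strategy_CC hsplit hCne
    have hCmem : C.card ∈ {k | ∃ S : List (Finset V),
        ValidStrategy S ∧ IsWinning G Set.univ S ∧ IsMonotoneStrat G Set.univ S ∧ Uses S k} :=
      ⟨[C, C], hv, hw, hm, hu⟩
    have hMne : Set.Nonempty {k | ∃ S : List (Finset V),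
        ValidStrategy S ∧ IsWinning G Set.univ S ∧ IsMonotoneStrat G Set.univ S ∧ Uses S k} :=
      ⟨_, hCmem⟩
    have hlow1 : ∀ k ∈ {k | ∃ S : List (Finset V),
        ValidStrategy S ∧ IsWinning G Set.univ S ∧ IsMonotoneStrat G Set.univ S ∧ Uses S k},
        C.card - 1 ≤ k := by
      rintro k ⟨S, -, hwin, -, hk⟩
      by_contra h
      push_neg at h
      exact not_winning_of_big_clique hclique hk (by omega) hwin
    by_cases hsimp : ∃ v ∈ C, G.IsClique (G.neighborSet v)
    · obtain ⟨v₀, hv₀, hv₀cl⟩ := hsimp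
      have hNv := simplicial_neighborSet hsplit hv₀ hv₀cl
      obtain ⟨hv', hw', hm', hu'⟩ := strategy_D hsplit hv₀ hNv hC2
      have hmem2 : C.card - 1 ∈ {k | ∃ S : List (Finset V),
          ValidStrategy S ∧ IsWinning G Set.univ S ∧ IsMonotoneStrat G Set.univ S ∧ Uses S k} :=
        ⟨_, hv', hw', hm', hu'⟩
      have heq : sInf {k | ∃ S : List (Finset V),
          ValidStrategy S ∧ IsWinning G Set.univ S ∧ IsMonotoneStrat G Set.univ S ∧ Uses S k}
          = C.card - 1 :=
        le_antisymm (Nat.sInf_le hmem2) (hlow1 _ (Nat.sInf_mem hMne))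
      exact ⟨⟨fun _ => ⟨v₀, hv₀, hv₀cl⟩, fun _ => by rw [hmh_eq, heq]⟩,
        fun h => absurd ⟨v₀, hv₀, hv₀cl⟩ h⟩
    · have hns := exists_I_neighbor hsplit hsimp
      have hlow2 : ∀ k ∈ {k | ∃ S : List (Finset V),
          ValidStrategy S ∧ IsWinning G Set.univ S ∧ IsMonotoneStrat G Set.univ S ∧ Uses S k},
          C.card ≤ k := by
        rintro k ⟨S, -, hwin, hmono, hk⟩
        exact mono_lower hsplit hns hwin hmono hk
      have heq : sInf {k | ∃ S : List (Finset V),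
          ValidStrategy S ∧ IsWinning G Set.univ S ∧ IsMonotoneStrat G Set.univ S ∧ Uses S k}
          = C.card :=
        le_antisymm (Nat.sInf_le hCmem) (hlow2 _ (Nat.sInf_mem hMne))
      have hmhC : mhunterNum G = C.card := by rw [hmh_eq, heq]
      refine ⟨⟨fun h1 => ?_, fun hs => absurd hs hsimp⟩, fun _ => hmhC⟩
      rw [hmhC] at h1
      omega

end HuntersRabbit
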